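/- Suppose the parameters are in Case 1 or Case 2. Then lim_{x→∞} v_β(x) = ∞ if and only if there exists x₀ > 0 such that v_β(x₀) > h/η. -/

import Mathlib

/-!
With `k = h/η` the equation reads `v' = q (v - k) + c` for a continuous `q` and the constant
`c = (2/σ²)(β + (αh/4) k² - a k)`, so `(v - k) exp (-∫₀ʸ q)` is monotone in the direction of the
sign of `c`. As `v 0 = -r < k`, reaching a value above `k` forces `c ≥ 0`, and then `v` stays
above `k`. Eventually `q ≥ 2/σ²` thanks to the term `η y`, so from some `y₂` on `v` increases and
`v' ≥ (2/σ²)(v y₂ - k) > 0`, which gives linear growth.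
-/

open Set Filter

noncomputable section

/-- `IsIVP σ η αh h r a β v v'` says that `v : [0,∞) → ℝ` is a C¹ solution
(with derivative `v'`) of the initial value problem IVP(β):
`(σ²/2)·v′(y) = β + (αh/4)·v(y)² + η·y·(v(y) − h/η) − a·v(y)` for `y ≥ 0`, `v(0) = −r`. -/
def IsIVP (σ η αh h r a β : ℝ) (v v' : ℝ → ℝ) : Prop :=
  ContinuousOn v' (Set.Ici 0) ∧
  (∀ y ∈ Set.Ici (0:ℝ), HasDerivWithinAt v (v' y) (Set.Ici 0) y) ∧
  (∀ y ∈ Set.Ici (0:ℝ),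
    σ ^ 2 / 2 * v' y = β + αh / 4 * (v y) ^ 2 + η * y * (v y - h / η) - a * v y) ∧
  v 0 = -r

section Ici

variable {f f' : ℝ → ℝ} {a : ℝ}

theorem monotoneOn_Ici_of_hasDerivWithinAt_nonneg
    (hf : ∀ x ∈ Ici a, HasDerivWithinAt f (f' x) (Ici a) x) (hf' : ∀ x ∈ Ici a, 0 ≤ f' x) :
    MonotoneOn f (Ici a) :=
  monotoneOn_of_hasDerivWithinAt_nonneg (convex_Ici a)
    (fun x hx => (hf x hx).continuousWithinAt)
    (fun x hx => (hf x (interior_subset hx)).mono interior_subset)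
    (fun x hx => hf' x (interior_subset hx))

theorem antitoneOn_Ici_of_hasDerivWithinAt_nonpos
    (hf : ∀ x ∈ Ici a, HasDerivWithinAt f (f' x) (Ici a) x) (hf' : ∀ x ∈ Ici a, f' x ≤ 0) :
    AntitoneOn f (Ici a) :=
  antitoneOn_of_hasDerivWithinAt_nonpos (convex_Ici a)
    (fun x hx => (hf x hx).continuousWithinAt)
    (fun x hx => (hf x (interior_subset hx)).mono interior_subset)
    (fun x hx => hf' x (interior_subset hx))

theorem tendsto_atTop_of_hasDerivWithinAt_Ici_ge {ε : ℝ} (hε : 0 < ε)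
    (hf : ∀ x ∈ Ici a, HasDerivWithinAt f (f' x) (Ici a) x) (hf' : ∀ x ∈ Ici a, ε ≤ f' x) :
    Tendsto f atTop atTop := by
  have hmono : MonotoneOn (fun x => f x - ε * x) (Ici a) :=
    monotoneOn_Ici_of_hasDerivWithinAt_nonneg
      (fun x hx => (hf x hx).sub ((hasDerivWithinAt_id x _).const_mul ε))
      (fun x hx => by simpa using hf' x hx)
  have hlin : Tendsto (fun x => f a - ε * a + ε * x) atTop atTop :=
    tendsto_atTop_add_const_left _ _ (tendsto_id.const_mul_atTop hε)
  refine tendsto_atTop_mono' atTop ?_ hlin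
  filter_upwards [eventually_ge_atTop a] with x hx
  linarith [hmono self_mem_Ici hx hx]

end Ici

section LinearODE

variable {v q : ℝ → ℝ} {k c : ℝ}

theorem hasDerivWithinAt_sub_mul_exp_neg_integral (hq : Continuous q)
    (hv : ∀ y ∈ Ici (0 : ℝ), HasDerivWithinAt v (q y * (v y - k) + c) (Ici 0) y) :
    ∀ y ∈ Ici (0 : ℝ),
      HasDerivWithinAt (fun y => (v y - k) * Real.exp (-∫ t in (0 : ℝ)..y, q t))
        (c * Real.exp (-∫ t in (0 : ℝ)..y, q t)) (Ici 0) y := by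
  intro y hy
  have hP : HasDerivAt (fun y => ∫ t in (0 : ℝ)..y, q t) (q y) y :=
    hq.integral_hasStrictDerivAt 0 y |>.hasDerivAt
  exact (((hv y hy).sub_const k).mul hP.neg.exp.hasDerivWithinAt).congr_deriv
    (by simp only [Pi.neg_apply]; ring)

theorem nonneg_of_linearODE_of_lt_of_lt (hq : Continuous q)
    (hv : ∀ y ∈ Ici (0 : ℝ), HasDerivWithinAt v (q y * (v y - k) + c) (Ici 0) y)
    (h0 : v 0 < k) {x₀ : ℝ} (hx₀ : 0 ≤ x₀) (hkx₀ : k < v x₀) : 0 ≤ c := by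
  by_contra! hc
  have hanti := antitoneOn_Ici_of_hasDerivWithinAt_nonpos
    (hasDerivWithinAt_sub_mul_exp_neg_integral hq hv)
    (fun y _ => (mul_neg_of_neg_of_pos hc (Real.exp_pos _)).le)
  have := hanti self_mem_Ici hx₀ hx₀
  simp only [intervalIntegral.integral_same, neg_zero, Real.exp_zero, mul_one] at this
  nlinarith [Real.exp_pos (-∫ t in (0 : ℝ)..x₀, q t)]

theorem lt_of_linearODE_of_lt_of_le (hq : Continuous q)
    (hv : ∀ y ∈ Ici (0 : ℝ), HasDerivWithinAt v (q y * (v y - k) + c) (Ici 0) y)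
    (hc : 0 ≤ c) {x₀ : ℝ} (hx₀ : 0 ≤ x₀) (hkx₀ : k < v x₀) {y : ℝ} (hy : x₀ ≤ y) : k < v y := by
  have hmono := monotoneOn_Ici_of_hasDerivWithinAt_nonneg
    (hasDerivWithinAt_sub_mul_exp_neg_integral hq hv)
    (fun y _ => mul_nonneg hc (Real.exp_pos _).le)
  have := hmono hx₀ (hx₀.trans hy) hy
  by_contra! hle
  nlinarith [Real.exp_pos (-∫ t in (0 : ℝ)..x₀, q t), Real.exp_pos (-∫ t in (0 : ℝ)..y, q t)]

end LinearODE

theorem tendsto_atTop_of_linearODE_Ici {v q : ℝ → ℝ} {k c a m : ℝ} (hm : 0 < m)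
    (hv : ∀ y ∈ Ici a, HasDerivWithinAt v (q y * (v y - k) + c) (Ici a) y) (hc : 0 ≤ c)
    (hqm : ∀ y ∈ Ici a, m ≤ q y) (hvk : ∀ y ∈ Ici a, k < v y) :
    Tendsto v atTop atTop := by
  have hmono : MonotoneOn v (Ici a) := monotoneOn_Ici_of_hasDerivWithinAt_nonneg hv fun y hy =>
    add_nonneg (mul_nonneg (hm.le.trans (hqm y hy)) (sub_nonneg.2 (hvk y hy).le)) hc
  refine tendsto_atTop_of_hasDerivWithinAt_Ici_ge (mul_pos hm (sub_pos.2 (hvk a self_mem_Ici)))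
    hv fun y hy => ?_
  calc m * (v a - k) ≤ q y * (v y - k) :=
        mul_le_mul (hqm y hy) (by linarith [hmono self_mem_Ici hy hy])
          (sub_pos.2 (hvk a self_mem_Ici)).le (hm.le.trans (hqm y hy))
    _ ≤ q y * (v y - k) + c := le_add_of_nonneg_right hc

/-- The coefficient of `v - h/η` in the equation, by
`(αh/4) v² + η y (v - h/η) - a v = (αh/4 (v + h/η) + η y - a)(v - h/η) + (αh/4)(h/η)² - a h/η`;
`v` is read at `max y 0` so that the coefficient is continuous on all of `ℝ`. -/
def ivpCoeff (σ η αh h a : ℝ) (v : ℝ → ℝ) (y : ℝ) : ℝ :=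
  2 / σ ^ 2 * (αh / 4 * (v (max y 0) + h / η) + η * y - a)

namespace IsIVP

variable {σ η αh h r a β : ℝ} {v v' : ℝ → ℝ}

theorem continuousOn (hIVP : IsIVP σ η αh h r a β v v') : ContinuousOn v (Ici 0) :=
  fun y hy => (hIVP.2.1 y hy).continuousWithinAt

theorem continuous_ivpCoeff (hIVP : IsIVP σ η αh h r a β v v') :
    Continuous (ivpCoeff σ η αh h a v) := by
  have : Continuous fun y : ℝ => v (max y 0) :=
    hIVP.continuousOn.comp_continuous (continuous_id.max continuous_const) fun y => le_max_right y 0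
  exact continuous_const.mul (((continuous_const.mul (this.add continuous_const)).add
    (continuous_const.mul continuous_id)).sub continuous_const)

theorem hasDerivWithinAt_linear (hσ : σ ≠ 0) (hη : η ≠ 0) (hIVP : IsIVP σ η αh h r a β v v') :
    ∀ y ∈ Ici (0 : ℝ), HasDerivWithinAt v (ivpCoeff σ η αh h a v y * (v y - h / η) +
      2 / σ ^ 2 * (β + αh / 4 * (h / η) ^ 2 - a * (h / η))) (Ici 0) y := by
  intro y hy
  refine (hIVP.2.1 y hy).congr_deriv ?_
  rw [show v' y = 2 / σ ^ 2 * (σ ^ 2 / 2 * v' y) by field_simp, hIVP.2.2.1 y hy, ivpCoeff,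
    max_eq_left hy]
  field_simp
  ring

end IsIVP

theorem two_div_sq_le_ivpCoeff {σ η αh h a : ℝ} {v : ℝ → ℝ} (hσ : 0 < σ) (hη : 0 < η)
    (hαh : 0 < αh) {y : ℝ} (hy : 0 ≤ y) (hay : (a + 1) / η ≤ y) (hv : 0 ≤ v y + h / η) :
    2 / σ ^ 2 ≤ ivpCoeff σ η αh h a v y := by
  have hηy : a + 1 ≤ η * y := by rwa [div_le_iff₀' hη] at hay
  rw [ivpCoeff, max_eq_left hy]
  refine le_mul_of_one_le_right (by positivity) ?_
  nlinarith [mul_nonneg hαh.le hv]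

theorem stmt_10_general (σ η αh h r a β : ℝ) (hσ : 0 < σ) (hη : 0 < η) (hαh : 0 < αh)
    (hh : 0 < h) (hr : 0 < r)
    (v v' : ℝ → ℝ) (hIVP : IsIVP σ η αh h r a β v v') :
    Tendsto v atTop atTop ↔ ∃ x₀ : ℝ, 0 < x₀ ∧ h / η < v x₀ := by
  refine ⟨fun hv => ((hv.eventually_gt_atTop (h / η)).and (eventually_gt_atTop 0)).exists.imp
    fun _ hx => ⟨hx.2, hx.1⟩, ?_⟩
  rintro ⟨x₀, hx₀, hvx₀⟩
  have hk : 0 < h / η := div_pos hh hη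
  have hlin := hIVP.hasDerivWithinAt_linear hσ.ne' hη.ne'
  have hq := hIVP.continuous_ivpCoeff
  have hv0 : v 0 < h / η := by rw [hIVP.2.2.2]; linarith
  have hc := nonneg_of_linearODE_of_lt_of_lt hq hlin hv0 hx₀.le hvx₀
  set y₂ := max x₀ ((a + 1) / η)
  have hy₂ : 0 ≤ y₂ := hx₀.le.trans (le_max_left _ _)
  have hvk : ∀ y ∈ Ici y₂, h / η < v y := fun y hy =>
    lt_of_linearODE_of_lt_of_le hq hlin hc hx₀.le hvx₀ ((le_max_left _ _).trans hy)
  have hsub : Ici y₂ ⊆ Ici 0 := Ici_subset_Ici.2 hy₂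
  refine tendsto_atTop_of_linearODE_Ici (m := 2 / σ ^ 2) (by positivity)
    (fun y hy => (hlin y (hsub hy)).mono hsub) hc (fun y hy => ?_) hvk
  exact two_div_sq_le_ivpCoeff hσ hη hαh (hy₂.trans hy) ((le_max_right _ _).trans hy)
    (by linarith [hvk y hy])

/-- In Case 1 or Case 2, `v_β(x) → ∞` as `x → ∞` iff `v_β(x₀) > h/η` for some `x₀ > 0`. -/
theorem stmt_10 (σ η αh h r a β : ℝ) (hσ : 0 < σ) (hη : 0 < η) (hαh : 0 < αh)
    (hh : 0 < h) (hr : 0 < r)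
    (hcase : (-(αh / 4) * r < a ∧ 0 ≤ β) ∨
      (a ≤ -(αh / 4) * r ∧ -a * r - αh / 4 * r ^ 2 < β))
    (v v' : ℝ → ℝ) (hIVP : IsIVP σ η αh h r a β v v') :
    Tendsto v atTop atTop ↔ ∃ x₀ : ℝ, 0 < x₀ ∧ h / η < v x₀ :=
  stmt_10_general σ η αh h r a β hσ hη hαh hh hr v v' hIVP
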